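/- Let (Y,Z) be a dual pair, C, D ⊆ Y weakly closed cones and B₁, B₂ ⊆ Y weakly closed convex sets containing zero. If Y is conormal with respect to (C,D,B₁,λB₂) for all λ > 1 (i.e., B₁ ⊆ (λB₂ ∩ C) + D for all λ > 1), then Z is normal with respect to (C°,D°,B₁°,B₂°), i.e., (B₂° + C°) ∩ D° ⊆ B₁°. -/
import Mathlib


open Pointwise

/-- The one-sided polar of a subset `A ⊆ Y` in the dual pair `(Y,Z)` given by `B`. -/
def onesidedPolar {Y Z : Type*} [AddCommGroup Y] [Module ℝ Y] [AddCommGroup Z] [Module ℝ Z]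
    (B : Y →ₗ[ℝ] Z →ₗ[ℝ] ℝ) (A : Set Y) : Set Z :=
  {z : Z | ∀ a ∈ A, B a z ≤ 1}

/-- If `Y` is conormal w.r.t. `(C,D,B₁,λB₂)` for all `λ > 1`, then `Z` is
normal w.r.t. `(C°,D°,B₁°,B₂°)`, i.e. `(B₂° + C°) ∩ D° ⊆ B₁°`. -/
theorem normal_polars_of_conormal_dilations
    {Y Z : Type*} [AddCommGroup Y] [Module ℝ Y] [AddCommGroup Z] [Module ℝ Z]
    (B : Y →ₗ[ℝ] Z →ₗ[ℝ] ℝ)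
    (hsepY : ∀ y : Y, (∀ z : Z, B y z = 0) → y = 0)
    (hsepZ : ∀ z : Z, (∀ y : Y, B y z = 0) → z = 0)
    (C D B₁ B₂ : Set Y)
    (hCcl : IsClosed (X := WeakBilin B) C) (hCne : C.Nonempty)
    (hCadd : C + C ⊆ C) (hCsmul : ∀ l : ℝ, 0 ≤ l → l • C ⊆ C)
    (hDcl : IsClosed (X := WeakBilin B) D) (hDne : D.Nonempty)
    (hDadd : D + D ⊆ D) (hDsmul : ∀ l : ℝ, 0 ≤ l → l • D ⊆ D)
    (hB₁cl : IsClosed (X := WeakBilin B) B₁) (hB₁conv : Convex ℝ B₁) (hB₁0 : (0 : Y) ∈ B₁)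
    (hB₂cl : IsClosed (X := WeakBilin B) B₂) (hB₂conv : Convex ℝ B₂) (hB₂0 : (0 : Y) ∈ B₂)
    (hconormal : ∀ l : ℝ, 1 < l → B₁ ⊆ ((l • B₂) ∩ C) + D) :
    (onesidedPolar B B₂ + onesidedPolar B C) ∩ onesidedPolar B D ⊆ onesidedPolar B B₁ := by
  rintro z ⟨⟨z₂, hz₂, zc, hzc, rfl⟩, hzD⟩
  intro y hy
  have hCle : ∀ c ∈ C, B c zc ≤ 0 := by
    intro c hc
    by_contra h
    push_neg at h
    have ht : (0:ℝ) < 2 / (B c zc) := by positivity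
    have hm : (2 / B c zc) • c ∈ C := hCsmul _ ht.le (Set.smul_mem_smul_set hc)
    have h2 := hzc _ hm
    rw [map_smul] at h2
    simp only [LinearMap.smul_apply, smul_eq_mul] at h2
    rw [div_mul_cancel₀ _ (ne_of_gt h)] at h2
    linarith
  have hDle : ∀ d ∈ D, B d (z₂ + zc) ≤ 0 := by
    intro d hd
    by_contra h
    push_neg at h
    have ht : (0:ℝ) < 2 / (B d (z₂ + zc)) := by positivity
    have hm : (2 / B d (z₂ + zc)) • d ∈ D := hDsmul _ ht.le (Set.smul_mem_smul_set hd)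
    have h2 := hzD _ hm
    rw [map_smul] at h2
    simp only [LinearMap.smul_apply, smul_eq_mul] at h2
    rw [div_mul_cancel₀ _ (ne_of_gt h)] at h2
    linarith
  have key : ∀ l : ℝ, 1 < l → B y (z₂ + zc) ≤ l := by
    intro l hl
    obtain ⟨u, hu, d, hd, rfl⟩ := hconormal l hl hy
    obtain ⟨b, hb, rfl⟩ := hu.1
    have h1 : B (l • b) z₂ ≤ l := by
      rw [map_smul]
      simp only [LinearMap.smul_apply, smul_eq_mul]
      have := hz₂ b hb
      nlinarith
    have h2 : B (l • b) zc ≤ 0 := hCle _ hu.2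
    have h3 := hDle d hd
    simp only [map_add, LinearMap.add_apply] at *
    linarith
  by_contra h
  push_neg at h
  have := key ((1 + B y (z₂ + zc)) / 2) (by linarith)
  linarith
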